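/- There exist C > 0 and ε₀ > 0 such that for all ε ∈ (0, ε₀), all θ ∈ [0,π], and all pairs (ξ,c) with ξ ∈ [−ξ₁, ξ₂], ξ < c, and |ξ| ≤ c − ξ ≤ 3(ξ₁+ξ₂): |S(ξ,θ;c) − 𝓘(ξ,θ;c)| ≤ C. -/

import Mathlib

/-!
With `d = c - ξ > 0`, evenness of `w θ` gives `w θ (ξ - t - c) = w θ (t + d)`, so `S` and `𝓘` are
the sum over the lattice `2 s₀ ℕ` and the normalised integral over `(0, ∞)` of the single profile
`g t = w θ ξ / w θ (t + d)`. This profile is nonnegative, decreasing and decays like `exp (-t / 2)`,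
so the integral test bounds the difference by `g 0 = w θ ξ / w θ d`, which is at most `1` because
`|ξ| ≤ d` and `w θ` increases with `|x|`. Hence `C = 1` works for every `ε > 0`.
-/

open Real MeasureTheory

noncomputable section

/-- The distance parameter `a_ε`. -/
def aEps (r₁ r₂ ε : ℝ) : ℝ :=
  Real.sqrt ε * Real.sqrt ((2*r₁+ε)*(2*r₂+ε)*(2*r₁+2*r₂+ε)) / (2*(r₁+r₂+ε))

def xi (r : ℝ) (r₁ r₂ ε : ℝ) : ℝ := Real.arsinh (aEps r₁ r₂ ε / r)

/-- `w θ ξ = √(cosh ξ − cos θ)`. -/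
def w (θ ξ : ℝ) : ℝ := Real.sqrt (Real.cosh ξ - Real.cos θ)

/-- The series `S(ξ,θ;c)`. -/
def S (s₀ ξ θ c : ℝ) : ℝ := ∑' m : ℕ, w θ ξ / w θ (ξ - 2 * m * s₀ - c)

/-- The integral `𝓘(ξ,θ;c)`. -/
def I (s₀ ξ θ c : ℝ) : ℝ := (1 / (2 * s₀)) * ∫ t in Set.Ioi (0:ℝ), w θ ξ / w θ (ξ - t - c)

open Set

theorem AntitoneOn.abs_tsum_sub_integral_Ioi_le {f : ℝ → ℝ} (anti : AntitoneOn f (Ici 0))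
    (integrable : IntegrableOn f (Ioi 0)) (nonneg : ∀ t ∈ Ioi 0, 0 ≤ f t) :
    |∑' n : ℕ, f n - ∫ x in Ioi 0, f x| ≤ f 0 := by
  have hf0 : 0 ≤ f 0 :=
    (nonneg 1 (mem_Ioi.2 one_pos)).trans
      (anti (mem_Ici.2 le_rfl) (mem_Ici.2 zero_le_one) zero_le_one)
  have summable := anti.summable_of_integrableOn_Ioi_zero integrable nonneg
  rw [abs_le]
  constructor
  · linarith [anti.integral_le_tsum summable nonneg]
  · linarith [anti.tsum_le_integral integrable nonneg]

theorem AntitoneOn.abs_tsum_comp_mul_sub_integral_Ioi_le {f : ℝ → ℝ} {h : ℝ} (hh : 0 < h)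
    (anti : AntitoneOn f (Ici 0)) (integrable : IntegrableOn f (Ioi 0))
    (nonneg : ∀ t ∈ Ioi 0, 0 ≤ f t) :
    |∑' n : ℕ, f (h * n) - h⁻¹ * ∫ x in Ioi 0, f x| ≤ f 0 := by
  have anti_comp : AntitoneOn (fun u => f (h * u)) (Ici 0) := fun u hu v hv huv =>
    anti (mem_Ici.2 (mul_nonneg hh.le hu)) (mem_Ici.2 (mul_nonneg hh.le hv))
      (mul_le_mul_of_nonneg_left huv hh.le)
  have integrable_comp : IntegrableOn (fun u => f (h * u)) (Ioi 0) :=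
    (integrableOn_Ioi_comp_mul_left_iff f 0 hh).2 (by rwa [mul_zero])
  have := anti_comp.abs_tsum_sub_integral_Ioi_le integrable_comp
    (fun t ht => nonneg _ (mul_pos hh ht))
  rwa [integral_comp_mul_left_Ioi f 0 hh, mul_zero, smul_eq_mul] at this

section Profile

variable {θ : ℝ}

lemma continuous_w (θ : ℝ) : Continuous (w θ) := by
  unfold w
  fun_prop

lemma w_neg (θ x : ℝ) : w θ (-x) = w θ x := by
  simp only [w, cosh_neg]

lemma w_pos {x : ℝ} (hx : x ≠ 0) : 0 < w θ x :=
  sqrt_pos.2 (sub_pos.2 ((cos_le_one θ).trans_lt (one_lt_cosh.2 hx)))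

lemma w_le_w {x y : ℝ} (h : |x| ≤ |y|) : w θ x ≤ w θ y :=
  sqrt_le_sqrt (sub_le_sub_right (cosh_le_cosh.2 h) _)

lemma sqrt_mul_exp_half_le_w {d x : ℝ} (hd : 0 < d) (hx : d ≤ x) :
    √((1 - (cosh d)⁻¹) / 2) * exp (x / 2) ≤ w θ x := by
  have hκ : 0 ≤ 1 - (cosh d)⁻¹ := sub_nonneg.2 (inv_le_one_of_one_le₀ (one_le_cosh d))
  -- `cosh x ≥ cosh d` absorbs the constant: `cosh x - 1 ≥ (1 - (cosh d)⁻¹) cosh x`.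
  have hcosh : (cosh d)⁻¹ * cosh x ≥ 1 := by
    rw [ge_iff_le, ← div_eq_inv_mul, one_le_div (cosh_pos d),
      cosh_le_cosh, abs_of_pos hd, abs_of_pos (hd.trans_le hx)]
    exact hx
  have hexp : exp x / 2 ≤ cosh x := by
    rw [cosh_eq]
    linarith [exp_pos (-x)]
  rw [w, le_sqrt (by positivity) (sub_nonneg.2 ((cos_le_one θ).trans (one_le_cosh x))),
    mul_pow, sq_sqrt (by positivity), ← exp_nat_mul]
  calc (1 - (cosh d)⁻¹) / 2 * exp (((2 : ℕ) : ℝ) * (x / 2))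
      = (1 - (cosh d)⁻¹) * (exp x / 2) := by ring_nf
    _ ≤ (1 - (cosh d)⁻¹) * cosh x := mul_le_mul_of_nonneg_left hexp hκ
    _ ≤ cosh x - 1 := by linarith
    _ ≤ cosh x - cos θ := by linarith [cos_le_one θ]

variable {A d : ℝ}

lemma antitoneOn_div_w_add (hA : 0 ≤ A) (hd : 0 < d) :
    AntitoneOn (fun t => A / w θ (t + d)) (Ici 0) := fun u hu v hv huv => by
  have hu' : 0 < u + d := add_pos_of_nonneg_of_pos hu hd
  have hv' : 0 < v + d := add_pos_of_nonneg_of_pos hv hd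
  refine div_le_div_of_nonneg_left hA (w_pos hu'.ne') (w_le_w ?_)
  rw [abs_of_pos hu', abs_of_pos hv']
  linarith

lemma integrableOn_div_w_add (hA : 0 ≤ A) (hd : 0 < d) :
    IntegrableOn (fun t => A / w θ (t + d)) (Ioi 0) := by
  set κ := √((1 - (cosh d)⁻¹) / 2)
  have hκ : 0 < κ := sqrt_pos.2 (div_pos (sub_pos.2 (inv_lt_one_of_one_lt₀ (one_lt_cosh.2 hd.ne')))
    two_pos)
  have hbound : ∀ t ∈ Ioi (0 : ℝ), ‖A / w θ (t + d)‖ ≤ A / κ * exp (-(1 / 2) * t) := by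
    intro t ht
    have htd : 0 < t + d := add_pos ht hd
    rw [norm_of_nonneg (div_nonneg hA (w_pos htd.ne').le)]
    calc A / w θ (t + d) ≤ A / (κ * exp ((t + d) / 2)) :=
          div_le_div_of_nonneg_left hA (by positivity)
            (sqrt_mul_exp_half_le_w hd (le_add_of_nonneg_left ht.le))
      _ ≤ A / (κ * exp (t / 2)) := by gcongr; linarith
      _ = A / κ * exp (-(1 / 2) * t) := by
          rw [show -(1 / 2) * t = -(t / 2) by ring, exp_neg]
          field_simp
  refine Integrable.mono' ((exp_neg_integrableOn_Ioi 0 one_half_pos).const_mul (A / κ)) ?_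
    ((ae_restrict_iff' measurableSet_Ioi).2 (ae_of_all _ hbound))
  refine ContinuousOn.aestronglyMeasurable ?_ measurableSet_Ioi
  exact continuousOn_const.div ((continuous_w θ).comp (continuous_add_const d)).continuousOn
    fun t ht => (w_pos (add_pos ht hd).ne').ne'

end Profile

theorem abs_S_sub_I_le_one {s ξ θ c : ℝ} (hs : 0 < s) (hξc : ξ < c) (habs : |ξ| ≤ c - ξ) :
    |S s ξ θ c - I s ξ θ c| ≤ 1 := by
  have hd : 0 < c - ξ := sub_pos.2 hξc
  have hw : ∀ t, w θ (ξ - t - c) = w θ (t + (c - ξ)) := fun t => by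
    rw [← w_neg]
    ring_nf
  have hS : S s ξ θ c = ∑' n : ℕ, w θ ξ / w θ (2 * s * n + (c - ξ)) :=
    tsum_congr fun n => by rw [hw, mul_right_comm]
  have hI : I s ξ θ c = (2 * s)⁻¹ * ∫ t in Ioi 0, w θ ξ / w θ (t + (c - ξ)) := by
    simp only [I, hw, one_div]
  have hA : 0 ≤ w θ ξ := sqrt_nonneg _
  have hg0 : w θ ξ / w θ (0 + (c - ξ)) ≤ 1 := by
    rw [zero_add, div_le_one (w_pos hd.ne')]
    exact w_le_w (by rwa [abs_of_pos hd])
  rw [hS, hI]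
  exact (AntitoneOn.abs_tsum_comp_mul_sub_integral_Ioi_le (by positivity)
    (antitoneOn_div_w_add hA hd) (integrableOn_div_w_add hA hd)
    fun t _ => div_nonneg hA (sqrt_nonneg _)).trans hg0

lemma aEps_pos {r₁ r₂ ε : ℝ} (hr₁ : 0 < r₁) (hr₂ : 0 < r₂) (hε : 0 < ε) : 0 < aEps r₁ r₂ ε := by
  unfold aEps
  positivity

lemma xi_pos {r r₁ r₂ ε : ℝ} (hr : 0 < r) (hr₁ : 0 < r₁) (hr₂ : 0 < r₂) (hε : 0 < ε) :
    0 < xi r r₁ r₂ ε :=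
  arsinh_pos_iff.2 (div_pos (aEps_pos hr₁ hr₂ hε) hr)

theorem stmt11 (r₁ r₂ : ℝ) (hr₁ : 0 < r₁) (hr₂ : 0 < r₂) :
    ∃ C > 0, ∃ ε₀ > 0, ∀ ε ∈ Set.Ioo 0 ε₀, ∀ θ ∈ Set.Icc 0 Real.pi,
      ∀ ξ ∈ Set.Icc (-(xi r₁ r₁ r₂ ε)) (xi r₂ r₁ r₂ ε), ∀ c : ℝ, ξ < c →
        |ξ| ≤ c - ξ → c - ξ ≤ 3 * (xi r₁ r₁ r₂ ε + xi r₂ r₁ r₂ ε) →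
        |S (xi r₁ r₁ r₂ ε + xi r₂ r₁ r₂ ε) ξ θ c -
          I (xi r₁ r₁ r₂ ε + xi r₂ r₁ r₂ ε) ξ θ c| ≤ C := by
  refine ⟨1, one_pos, 1, one_pos, ?_⟩
  rintro ε ⟨hε, -⟩ θ - ξ - c hξc habs -
  exact abs_S_sub_I_le_one (add_pos (xi_pos hr₁ hr₁ hr₂ hε) (xi_pos hr₂ hr₁ hr₂ hε)) hξc habs

end
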